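/- arXiv:2302.04444 — 3 statements merged into one kernel-verified Lean document; each statement's English description precedes it below -/
import Mathlib

section
/- Let Γ be a weighted graph. The map sending σ ∈ Aut(Γ) to the unique automorphism α ∈ A_Γ with α(e) = e and constant local action σ(α,v) = σ for all vertices v is a group isomorphism from Aut(Γ) onto the subgroup of A_Γ consisting of almost translations that fix the identity vertex e. -/
/-!
Setup for Cayley graphs of Coxeter groups.

A weighted graph `Γ = (VΓ, EΓ, m)` in the sense of the paper is encoded by a Mathlib
`CoxeterMatrix B` (`B = VΓ`): the weight `m x y` is `M x y`, where the entry `0` encodes `∞`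
(no relation / no edge).  The associated Coxeter group is `M.Group`, with standard generators
`M.simple x`.
-/

open CoxeterMatrix

variable {B : Type*}

/-- The automorphism group of a simple graph, as a subgroup of the permutation group
of its vertex set. -/
def graphAut {V : Type*} (G : SimpleGraph V) : Subgroup (Equiv.Perm V) where
  carrier := {σ | ∀ x y : V, G.Adj (σ x) (σ y) ↔ G.Adj x y}
  one_mem' := by intro x y; simp
  mul_mem' := by
    intro a b ha hb x y
    simpa [Equiv.Perm.mul_apply] using (ha (b x) (b y)).trans (hb x y)
  inv_mem' := by
    intro a ha x y
    simpa using (ha (a⁻¹ x) (a⁻¹ y)).symm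

/-- The group `Aut(Γ)` of weight-preserving automorphisms of the weighted graph encoded by the
Coxeter matrix `M`, as a subgroup of the permutation group of the vertex set. -/
def wAut (M : CoxeterMatrix B) : Subgroup (Equiv.Perm B) where
  carrier := {σ | ∀ x y : B, M (σ x) (σ y) = M x y}
  one_mem' := by intro x y; simp
  mul_mem' := by
    intro a b ha hb x y
    simpa [Equiv.Perm.mul_apply] using (ha (b x) (b y)).trans (hb x y)
  inv_mem' := by
    intro a ha x y
    simpa using (ha (a⁻¹ x) (a⁻¹ y)).symm

/-- The simplicial graph underlying a weighted graph (Coxeter matrix): distinct vertices `x, y`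
are adjacent iff the weight `M x y` is finite (recall that the entry `0` encodes `∞`). -/
def cGraph (M : CoxeterMatrix B) : SimpleGraph B where
  Adj x y := x ≠ y ∧ M x y ≠ 0
  symm := by
    constructor
    rintro x y ⟨h1, h2⟩
    exact ⟨h1.symm, by rwa [M.symmetric y x]⟩
  loopless := ⟨fun x h => h.1 rfl⟩

/-- The star of a vertex `x`: the vertex together with all its neighbours. -/
def starSet (M : CoxeterMatrix B) (x : B) : Set B := insert x ((cGraph M).neighborSet x)

/-- The Cayley graph `C_Γ` of the Coxeter group `W_Γ = M.Group` with respect to the standard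
generating set: `v` and `w` are adjacent iff `w = v * (M.simple x)` for some generator `x`
(the edge `{v, v * M.simple x}` is labelled by `x`). -/
def cayley (M : CoxeterMatrix B) : SimpleGraph M.Group where
  Adj v w := v ≠ w ∧ ∃ x : B, w = v * M.simple x
  symm := by
    constructor
    rintro v w ⟨hne, x, rfl⟩
    refine ⟨hne.symm, x, ?_⟩
    have h : M.simple x * M.simple x = 1 := M.toCoxeterSystem.simple_mul_simple_self x
    rw [mul_assoc, h, mul_one]
  loopless := ⟨fun v h => h.1 rfl⟩

/-- `τ : VΓ → VΓ` is the local action `σ(α, v)` of the (Cayley graph automorphism) `α` at the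
vertex `v`: for each generator `x`, `α` maps the edge `{v, v·x}` (labelled `x`) to the edge
`{α v, (α v)·(τ x)}` (labelled `τ x`). -/
def IsLocalAction (M : CoxeterMatrix B) (α : Equiv.Perm M.Group) (v : M.Group)
    (τ : B → B) : Prop :=
  ∀ x : B, α (v * M.simple x) = α v * M.simple (τ x)

/-- `Γ₁` is a factor associated with the separating set `S ⊊ VΓ`: the induced subgraph on
`VΓ ∖ S` is disconnected, and `Γ₁` is the union of `S` with a nonempty collection `C` of
connected components of `VΓ ∖ S` which omits at least one component (so `C` is a nonempty
union of components, closed under reachability, with nonempty complement in `VΓ ∖ S`). -/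
def IsFactor (M : CoxeterMatrix B) (S : Set B) (Γ₁ : Set B) : Prop :=
  S ≠ Set.univ ∧ ¬ ((cGraph M).induce Sᶜ).Connected ∧
  ∃ C : Set B, Γ₁ = S ∪ C ∧ C ⊆ Sᶜ ∧ C.Nonempty ∧ (Sᶜ \ C).Nonempty ∧
    (∀ x y : ↥(Sᶜ), ((cGraph M).induce Sᶜ).Reachable x y → (x : B) ∈ C → (y : B) ∈ C)

/-- `S` is a good separating set: some factor `Γ₁` associated with `S` carries a nontrivial
weight-preserving automorphism restricting to the identity on `S`. -/
def IsGoodSepSet (M : CoxeterMatrix B) (S : Set B) : Prop :=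
  ∃ Γ₁ : Set B, IsFactor M S Γ₁ ∧
    ∃ σ : Equiv.Perm ↥Γ₁, σ ≠ 1 ∧ (∀ a b : ↥Γ₁, M ((σ a : B)) ((σ b : B)) = M (a : B) (b : B)) ∧
      (∀ a : ↥Γ₁, (a : B) ∈ S → σ a = a)

/-- The permutation topology on a group of permutations of `V` (e.g. the automorphism group of a
graph with vertex set `V`): the topology of pointwise convergence, i.e. the topology induced from
the product topology on `V → V` where each factor carries the discrete topology.  Its basic open
neighbourhoods of the identity are the pointwise stabilisers of finite subsets of `V`. -/
def permTop {V : Type*} (H : Subgroup (Equiv.Perm V)) : TopologicalSpace ↥H :=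
  TopologicalSpace.induced (fun α => ((α : Equiv.Perm V) : V → V))
    (@Pi.topologicalSpace V (fun _ => V) (fun _ => ⊥))

open Classical in
/-- The weighted graph (Coxeter matrix) of a right-angled weighted graph: all edges of the
simplicial graph `G` get weight `2`. -/
noncomputable def ofGraph {V : Type*} (G : SimpleGraph V) : CoxeterMatrix V where
  M := Matrix.of fun x y => if x = y then 1 else if G.Adj x y then 2 else 0
  isSymm := by
    ext x y
    by_cases h : x = y
    · simp [Matrix.IsSymm, h]
    · simp only [Matrix.transpose_apply, Matrix.of_apply, if_neg h, if_neg (Ne.symm h)]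
      rw [G.adj_comm]
  diagonal i := by simp
  off_diagonal i j h := by
    simp only [Matrix.of_apply, if_neg h]
    split_ifs <;> simp

/-!
A weight-preserving permutation `σ` of `VΓ` respects the Coxeter relations, so it extends to a
group automorphism of `W_Γ`; this fixes `e` and has local action `σ` at every vertex. A permutation
of `W_Γ` is determined by its value at `e` together with a constant local action (induct on word
length), which gives injectivity and uniqueness. Conversely, if `α` fixes `e` and has constant local
action `τ`, then `α ((s_x s_y) ^ n) = (s_{τ x} s_{τ y}) ^ n`, so `τ` preserves the orders of the
products `s_x s_y`, and `τ` is a bijection because `α` is an automorphism of `C_Γ`.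

That the order of `s_x s_y` is exactly `m(x, y)` does not follow formally from the presentation; it
is read off the Tits representation on `⨁_{VΓ} ℂ`, in which `s_i s_j` acts on
`e_i + exp (± π i / m) e_j` by the primitive `m`-th roots of unity `exp (∓ 2 π i / m)`, and
unipotently with a nontrivial Jordan block when `m = ∞`.
-/

namespace Module.End

variable {R V : Type*} [CommRing R] [AddCommGroup V] [Module R V]

theorem geom_sum_apply_of_apply_eq_smul {f : Module.End R V} {μ : R} {v : V}
    (hv : f v = μ • v) (n : ℕ) :
    (∑ t ∈ Finset.range n, f ^ t) v = (∑ t ∈ Finset.range n, μ ^ t) • v := by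
  simpa [Polynomial.eval_finsetSum] using
    aeval_apply_of_mem_apply_eq_smul (p := ∑ t ∈ Finset.range n, Polynomial.X ^ t) hv

end Module.End

namespace CoxeterMatrix

open Complex Finsupp

variable (M : CoxeterMatrix B)

noncomputable section TitsRepresentation

def angleExp (m : ℕ) : ℂ := exp (Real.pi * I / m)

/-- The Tits form on basis vectors: `⟨e_i, e_j⟩ = titsCoeff (M i j) = -cos (π / M i j)`.
Since `π * I / 0 = 0`, `angleExp 0 = 1` and `titsCoeff 0 = -1`, the value for `M i j = ∞`. -/
def titsCoeff (m : ℕ) : ℂ := -(angleExp m + (angleExp m)⁻¹) / 2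

theorem angleExp_ne_zero (m : ℕ) : angleExp m ≠ 0 := exp_ne_zero _

theorem isPrimitiveRoot_angleExp_sq {m : ℕ} (hm : m ≠ 0) :
    IsPrimitiveRoot (angleExp m ^ 2) m := by
  rw [angleExp, ← exp_nat_mul]
  convert isPrimitiveRoot_exp m hm using 2
  push_cast
  ring

theorem titsCoeff_zero : titsCoeff 0 = -1 := by
  norm_num [titsCoeff, angleExp]

theorem titsCoeff_one : titsCoeff 1 = 1 := by
  norm_num [titsCoeff, angleExp, exp_pi_mul_I]

theorem angleExp_add_inv (m : ℕ) : angleExp m + (angleExp m)⁻¹ = -2 * titsCoeff m := by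
  rw [titsCoeff]; ring

def titsForm (i : B) : (B →₀ ℂ) →ₗ[ℂ] ℂ :=
  linearCombination ℂ fun j => titsCoeff (M i j)

def titsReflection (i : B) : Module.End ℂ (B →₀ ℂ) :=
  LinearMap.id - (titsForm M i).smulRight ((2 : ℂ) • single i 1)

theorem titsForm_single (i k : B) : titsForm M i (single k 1) = titsCoeff (M i k) := by
  simp [titsForm]

theorem titsForm_single_self (i : B) : titsForm M i (single i 1) = 1 := by
  rw [titsForm_single, M.diagonal, titsCoeff_one]

theorem titsReflection_apply (i : B) (v : B →₀ ℂ) :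
    titsReflection M i v = v - (2 * titsForm M i v) • single i 1 := by
  simp [titsReflection, mul_comm]

theorem titsReflection_mul_self (i : B) : titsReflection M i * titsReflection M i = 1 := by
  refine LinearMap.ext fun v => ?_
  rw [Module.End.mul_apply, titsReflection_apply, titsReflection_apply, map_sub, map_smul,
    titsForm_single_self, Module.End.one_apply]
  module

theorem titsReflection_mul_apply (i j : B) (v : B →₀ ℂ) :
    (titsReflection M i * titsReflection M j) v =
      v - (2 * titsForm M j v) • single j 1 -
        (2 * titsForm M i (titsReflection M j v)) • single i 1 := by
  rw [Module.End.mul_apply, titsReflection_apply, titsReflection_apply M j]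

theorem titsReflection_mul_apply_eigenvector {i j : B} {δ : ℂ} (hδ : δ ≠ 0)
    (h : δ + δ⁻¹ = -2 * titsCoeff (M i j)) :
    (titsReflection M i * titsReflection M j) (single i 1 + δ • single j 1) =
      δ⁻¹ ^ 2 • (single i 1 + δ • single j 1) := by
  have hji : titsCoeff (M j i) = titsCoeff (M i j) := by rw [M.symmetric]
  have hc : titsCoeff (M i j) = -(δ + δ⁻¹) / 2 := by linear_combination h / 2
  rw [titsReflection_mul_apply, titsReflection_apply]
  simp only [map_add, map_sub, map_smul, titsForm_single_self, titsForm_single, hji, hc,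
    smul_eq_mul]
  match_scalars <;> field_simp <;> ring

theorem geom_sum_titsReflection_mul_apply_single {i j : B} (hm0 : M i j ≠ 0)
    (hm1 : M i j ≠ 1) :
    (∑ t ∈ Finset.range (M i j), (titsReflection M i * titsReflection M j) ^ t)
        (single i 1) = 0 ∧
      (∑ t ∈ Finset.range (M i j), (titsReflection M i * titsReflection M j) ^ t)
        (single j 1) = 0 := by
  set S := ∑ t ∈ Finset.range (M i j), (titsReflection M i * titsReflection M j) ^ t
  set ε := angleExp (M i j)
  have hm : 1 < M i j := by omega
  have hζ : IsPrimitiveRoot (ε ^ 2) (M i j) := isPrimitiveRoot_angleExp_sq hm0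
  have hε : ε ≠ 0 := angleExp_ne_zero _
  have hkill : ∀ δ : ℂ, δ ≠ 0 → δ + δ⁻¹ = -2 * titsCoeff (M i j) →
      IsPrimitiveRoot (δ⁻¹ ^ 2) (M i j) → S (single i 1 + δ • single j 1) = 0 := by
    intro δ hδ h hprim
    rw [Module.End.geom_sum_apply_of_apply_eq_smul
      (titsReflection_mul_apply_eigenvector M hδ h), hprim.geom_sum_eq_zero hm, zero_smul]
  have hε₁ := hkill ε hε (angleExp_add_inv _) (by rw [inv_pow]; exact hζ.inv)
  have hε₂ := hkill ε⁻¹ (inv_ne_zero hε) (by rw [inv_inv, add_comm]; exact angleExp_add_inv _)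
    (by rwa [inv_inv])
  have hne : ε - ε⁻¹ ≠ 0 := by
    intro h
    apply hζ.ne_one hm
    rw [sq]
    nth_rw 2 [sub_eq_zero.mp h]
    exact mul_inv_cancel₀ hε
  have hj : S (single j 1) = 0 := by
    have h : (ε - ε⁻¹) • (single j 1 : B →₀ ℂ) = (single i 1 + ε • single j 1) -
        (single i 1 + ε⁻¹ • single j 1) := by module
    have := congrArg S h
    rw [map_sub, hε₁, hε₂, sub_zero, map_smul] at this
    exact (smul_eq_zero.mp this).resolve_left hne
  refine ⟨?_, hj⟩
  have h : (single i 1 : B →₀ ℂ) = (single i 1 + ε • single j 1) - ε • single j 1 := by module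
  rw [h, map_sub, map_smul, hε₁, hj, smul_zero, sub_zero]

theorem titsReflection_mul_pow {i j : B} (hm0 : M i j ≠ 0) (hm1 : M i j ≠ 1) :
    (titsReflection M i * titsReflection M j) ^ M i j = 1 := by
  obtain ⟨hi, hj⟩ := geom_sum_titsReflection_mul_apply_single M hm0 hm1
  -- `s_i s_j - 1` takes values in the span of `e_i` and `e_j`, which the geometric sum kills
  have hS : (∑ t ∈ Finset.range (M i j), (titsReflection M i * titsReflection M j) ^ t) *
      (titsReflection M i * titsReflection M j - 1) = 0 := by
    refine LinearMap.ext fun v => ?_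
    rw [Module.End.mul_apply, LinearMap.sub_apply, titsReflection_mul_apply,
      Module.End.one_apply]
    simp only [map_sub, map_smul, hi, hj, smul_zero, sub_zero, sub_self, LinearMap.zero_apply]
  have h := geom_sum_mul (titsReflection M i * titsReflection M j) (M i j)
  rwa [hS, eq_comm, sub_eq_zero] at h

theorem isLiftable_titsReflection : M.IsLiftable (titsReflection M) := by
  intro i j
  rcases eq_or_ne i j with rfl | hij
  · rw [M.diagonal, pow_one, titsReflection_mul_self]
  rcases eq_or_ne (M i j) 0 with hm0 | hm0
  · rw [hm0, pow_zero]
  exact titsReflection_mul_pow M hm0 (M.off_diagonal i j hij)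

def titsRep : M.Group →* Module.End ℂ (B →₀ ℂ) :=
  M.toCoxeterSystem.lift ⟨titsReflection M, isLiftable_titsReflection M⟩

theorem titsRep_simple (i : B) : titsRep M (M.simple i) = titsReflection M i :=
  M.toCoxeterSystem.lift_apply_simple (isLiftable_titsReflection M) i

theorem titsReflection_mul_pow_apply_of_eq_zero {i j : B} (hm0 : M i j = 0) (n : ℕ) :
    ((titsReflection M i * titsReflection M j) ^ n) (single i 1) =
      (2 * n + 1 : ℂ) • single i 1 + (2 * n : ℂ) • single j 1 := by
  have hij : titsCoeff (M i j) = -1 := by rw [hm0, titsCoeff_zero]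
  have hji : titsCoeff (M j i) = -1 := by rw [M.symmetric, hij]
  induction n with
  | zero => simp
  | succ n ih =>
    rw [pow_succ', Module.End.mul_apply, ih, titsReflection_mul_apply, titsReflection_apply]
    simp only [map_add, map_sub, map_smul, titsForm_single_self, titsForm_single, hij, hji,
      smul_eq_mul]
    push_cast
    match_scalars <;> ring

end TitsRepresentation

theorem dvd_of_titsReflection_mul_pow_eq_one {i j : B} (hij : i ≠ j) {n : ℕ}
    (hg : (titsReflection M i * titsReflection M j) ^ n = 1) : M i j ∣ n := by
  rcases eq_or_ne (M i j) 0 with hm0 | hm0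
  · have hj := congrArg (· j) (titsReflection_mul_pow_apply_of_eq_zero M hm0 n)
    simp only [hg, Module.End.one_apply, Finsupp.add_apply, Finsupp.smul_apply,
      Finsupp.single_eq_same, Finsupp.single_eq_of_ne' hij, smul_eq_mul, mul_zero, mul_one,
      zero_add] at hj
    rw [hm0, Nat.zero_dvd]
    exact_mod_cast (mul_eq_zero.mp hj.symm).resolve_left two_ne_zero
  · have hv := titsReflection_mul_apply_eigenvector M (inv_ne_zero (angleExp_ne_zero _))
      (by rw [inv_inv, add_comm]; exact angleExp_add_inv (M i j))
    rw [inv_inv] at hv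
    have hpow := Module.End.aeval_apply_of_mem_apply_eq_smul (p := Polynomial.X ^ n) hv
    simp only [map_pow, Polynomial.aeval_X, Polynomial.eval_pow, Polynomial.eval_X, hg,
      Module.End.one_apply] at hpow
    have hi := congrArg (· i) hpow
    simp only [Finsupp.add_apply, Finsupp.smul_apply, Finsupp.single_eq_same,
      Finsupp.single_eq_of_ne hij, smul_eq_mul, mul_zero, add_zero, mul_one] at hi
    exact ((isPrimitiveRoot_angleExp_sq hm0).pow_eq_one_iff_dvd n).mp hi.symm

theorem pow_simple_mul_simple_eq_one_iff (i j : B) (n : ℕ) :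
    (M.simple i * M.simple j) ^ n = 1 ↔ M i j ∣ n := by
  refine ⟨fun h => ?_, fun ⟨t, ht⟩ => ?_⟩
  · rcases eq_or_ne i j with rfl | hij
    · rw [M.diagonal]
      exact one_dvd n
    refine dvd_of_titsReflection_mul_pow_eq_one M hij ?_
    simpa [titsRep_simple] using congrArg (titsRep M) h
  · have h := M.toCoxeterSystem.simple_mul_simple_pow i j
    rw [M.toCoxeterSystem_simple] at h
    rw [ht, pow_mul, h, one_pow]

theorem simple_injective : Function.Injective M.simple := by
  intro i j h
  by_contra hij
  apply M.off_diagonal i j hij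
  have h1 := M.toCoxeterSystem.simple_mul_simple_self j
  rw [M.toCoxeterSystem_simple] at h1
  nth_rw 1 [← h] at h1
  rw [← pow_one (_ * _), pow_simple_mul_simple_eq_one_iff] at h1
  exact Nat.dvd_one.mp h1

theorem simple_ne_one (i : B) : M.simple i ≠ 1 := by
  intro h
  have h1 := M.toCoxeterSystem.length_simple i
  rw [M.toCoxeterSystem_simple, h, CoxeterSystem.length_one] at h1
  exact zero_ne_one h1

section GraphAutomorphisms

variable {M}

theorem isLiftable_simple_comp (σ : wAut M) : M.IsLiftable fun x => M.simple (σ.1 x) := by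
  intro x y
  have h := M.toCoxeterSystem.simple_mul_simple_pow (σ.1 x) (σ.1 y)
  rwa [M.toCoxeterSystem_simple, σ.2 x y] at h

noncomputable def wAutLift (σ : wAut M) : M.Group →* M.Group :=
  M.toCoxeterSystem.lift ⟨_, isLiftable_simple_comp σ⟩

theorem wAutLift_simple (σ : wAut M) (x : B) : wAutLift σ (M.simple x) = M.simple (σ.1 x) :=
  M.toCoxeterSystem.lift_apply_simple (isLiftable_simple_comp σ) x

theorem wAutLift_one : wAutLift (1 : wAut M) = MonoidHom.id M.Group :=
  M.toCoxeterSystem.ext_simple fun x => by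
    simp [M.toCoxeterSystem_simple, wAutLift_simple]

theorem wAutLift_mul (σ τ : wAut M) : wAutLift (σ * τ) = (wAutLift σ).comp (wAutLift τ) :=
  M.toCoxeterSystem.ext_simple fun x => by
    simp [M.toCoxeterSystem_simple, wAutLift_simple]

theorem wAutLift_comp_inv (σ : wAut M) : (wAutLift σ).comp (wAutLift σ⁻¹) = MonoidHom.id _ := by
  rw [← wAutLift_mul, mul_inv_cancel, wAutLift_one]

theorem wAutLift_inv_comp (σ : wAut M) : (wAutLift σ⁻¹).comp (wAutLift σ) = MonoidHom.id _ := by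
  rw [← wAutLift_mul, inv_mul_cancel, wAutLift_one]

variable (M) in
noncomputable def wAutToMulAut : wAut M →* MulAut M.Group where
  toFun σ := (wAutLift σ).toMulEquiv _ (wAutLift_inv_comp σ) (wAutLift_comp_inv σ)
  map_one' := MulEquiv.ext fun w => by simp [wAutLift_one]
  map_mul' σ τ := MulEquiv.ext fun w => by simp [wAutLift_mul]

end GraphAutomorphisms

section LocalAction

variable {M} {α β : Equiv.Perm M.Group} {τ : B → B}

theorem isLocalAction_wAutToMulAut (σ : wAut M) (v : M.Group) :
    IsLocalAction M (MulAut.toPerm M.Group (wAutToMulAut M σ)) v σ.1 := fun x =>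
  show wAutLift σ (v * M.simple x) = wAutLift σ v * M.simple (σ.1 x) by
    rw [map_mul, wAutLift_simple]

theorem eq_of_isLocalAction (h1 : α 1 = β 1) (hα : ∀ v, IsLocalAction M α v τ)
    (hβ : ∀ v, IsLocalAction M β v τ) : α = β := by
  ext w
  induction w using M.toCoxeterSystem.simple_induction_right with
  | one => exact h1
  | mul_simple_right w x ih => rw [M.toCoxeterSystem_simple, hα w x, hβ w x, ih]

theorem mem_graphAut_of_isLocalAction (hτ : Function.Surjective τ)
    (hα : ∀ v, IsLocalAction M α v τ) : α ∈ graphAut (cayley M) := by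
  intro v w
  constructor
  · rintro ⟨hne, y, hy⟩
    obtain ⟨x, rfl⟩ := hτ y
    rw [← hα] at hy
    exact ⟨fun h => hne (congrArg α h), x, α.injective hy⟩
  · rintro ⟨hne, x, rfl⟩
    exact ⟨fun h => hne (α.injective h), τ x, hα v x⟩

theorem apply_simple_of_isLocalAction (h1 : α 1 = 1) (hα : ∀ v, IsLocalAction M α v τ)
    (x : B) : α (M.simple x) = M.simple (τ x) := by
  simpa [h1] using hα 1 x

theorem apply_pow_simple_mul_simple_of_isLocalAction (h1 : α 1 = 1)
    (hα : ∀ v, IsLocalAction M α v τ) (x y : B) (n : ℕ) :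
    α ((M.simple x * M.simple y) ^ n) = (M.simple (τ x) * M.simple (τ y)) ^ n := by
  induction n with
  | zero => exact h1
  | succ n ih => rw [pow_succ, ← mul_assoc, hα _ y, hα _ x, ih, mul_assoc, ← pow_succ]

theorem coxeterMatrix_apply_eq_of_isLocalAction (h1 : α 1 = 1)
    (hα : ∀ v, IsLocalAction M α v τ) (x y : B) : M (τ x) (τ y) = M x y := by
  have hiff (n : ℕ) : M x y ∣ n ↔ M (τ x) (τ y) ∣ n := by
    rw [← pow_simple_mul_simple_eq_one_iff, ← pow_simple_mul_simple_eq_one_iff,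
      ← apply_pow_simple_mul_simple_of_isLocalAction h1 hα, ← h1, α.apply_eq_iff_eq, h1]
  exact Nat.dvd_antisymm ((hiff _).mp dvd_rfl) ((hiff _).mpr dvd_rfl)

theorem injective_of_isLocalAction (h1 : α 1 = 1) (hα : ∀ v, IsLocalAction M α v τ) :
    Function.Injective τ := fun x y h => M.simple_injective <| α.injective <| by
  rw [apply_simple_of_isLocalAction h1 hα, apply_simple_of_isLocalAction h1 hα, h]

theorem surjective_of_isLocalAction (hg : α ∈ graphAut (cayley M)) (h1 : α 1 = 1)
    (hα : ∀ v, IsLocalAction M α v τ) : Function.Surjective τ := by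
  intro y
  obtain ⟨w, hw⟩ := α.surjective (M.simple y)
  have hadj : (cayley M).Adj (α 1) (α w) := by
    rw [h1, hw]
    exact ⟨(M.simple_ne_one y).symm, y, (one_mul _).symm⟩
  obtain ⟨-, x, rfl⟩ := (hg _ _).mp hadj
  refine ⟨x, M.simple_injective ?_⟩
  rw [← apply_simple_of_isLocalAction h1 hα, ← hw, one_mul]

theorem exists_wAut_of_isLocalAction (hg : α ∈ graphAut (cayley M)) (h1 : α 1 = 1)
    (hα : ∀ v, IsLocalAction M α v τ) : ∃ σ : wAut M, σ.1 = τ :=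
  ⟨⟨Equiv.ofBijective τ ⟨injective_of_isLocalAction h1 hα,
    surjective_of_isLocalAction hg h1 hα⟩, coxeterMatrix_apply_eq_of_isLocalAction h1 hα⟩, rfl⟩

end LocalAction

end CoxeterMatrix

theorem wAut_iso_almost_translations_fixing_id {B : Type*} (M : CoxeterMatrix B) :
    ∃ Φ : ↥(wAut M) →* Equiv.Perm M.Group,
      Function.Injective Φ ∧
      (∀ σ : ↥(wAut M), Φ σ ∈ graphAut (cayley M) ∧ (Φ σ) (1 : M.Group) = 1 ∧
        ∀ v : M.Group, IsLocalAction M (Φ σ) v (σ : Equiv.Perm B)) ∧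
      (∀ (σ : ↥(wAut M)) (α : Equiv.Perm M.Group), α ∈ graphAut (cayley M) →
        α (1 : M.Group) = 1 → (∀ v : M.Group, IsLocalAction M α v (σ : Equiv.Perm B)) →
        α = Φ σ) ∧
      Set.range Φ = {α : Equiv.Perm M.Group | α ∈ graphAut (cayley M) ∧ α (1 : M.Group) = 1 ∧
        ∃ τ : B → B, ∀ v : M.Group, IsLocalAction M α v τ} := by
  set Φ := (MulAut.toPerm M.Group).comp (wAutToMulAut M)
  have hΦ (σ : wAut M) : Φ σ ∈ graphAut (cayley M) ∧ Φ σ 1 = 1 ∧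
      ∀ v, IsLocalAction M (Φ σ) v σ.1 :=
    ⟨mem_graphAut_of_isLocalAction σ.1.surjective (isLocalAction_wAutToMulAut σ),
      map_one (wAutToMulAut M σ), isLocalAction_wAutToMulAut σ⟩
  have hunique (σ : wAut M) (α : Equiv.Perm M.Group) (h1 : α 1 = 1)
      (hα : ∀ v, IsLocalAction M α v σ.1) : α = Φ σ :=
    eq_of_isLocalAction (h1.trans (hΦ σ).2.1.symm) hα (hΦ σ).2.2
  refine ⟨Φ, fun σ τ h => ?_, hΦ, fun σ α _ => hunique σ α, ?_⟩
  · ext x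
    apply M.simple_injective
    rw [← wAutLift_simple, ← wAutLift_simple]
    exact DFunLike.congr_fun h (M.simple x)
  · ext α
    refine ⟨?_, fun ⟨hg, h1, τ, hα⟩ => ?_⟩
    · rintro ⟨σ, rfl⟩
      exact ⟨(hΦ σ).1, (hΦ σ).2.1, σ.1, (hΦ σ).2.2⟩
    · obtain ⟨σ, rfl⟩ := exists_wAut_of_isLocalAction hg h1 hα
      exact ⟨σ, (hunique σ α h1 hα).symm⟩
end

section
/- Let Γ be a weighted graph, S ⊊ VΓ a good separating set, and Γ_1 the corresponding factor. Then the standard parabolic subgroup W_{Γ_1} has infinite index in the Coxeter group W_Γ. -/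
/-!
Setup for Cayley graphs of Coxeter groups.

A weighted graph `Γ = (VΓ, EΓ, m)` in the sense of the paper is encoded by a Mathlib
`CoxeterMatrix B` (`B = VΓ`): the weight `m x y` is `M x y`, where the entry `0` encodes `∞`
(no relation / no edge).  The associated Coxeter group is `M.Group`, with standard generators
`M.simple x`.
-/

open CoxeterMatrix

variable {B : Type*}

/-!
The Coxeter group acts on `ℝ^(B)` by its geometric (Tits) representation, in which `s i` is the
reflection `v ↦ v - 2 ⟨e i, v⟩ e i` for the form `⟨e i, e j⟩ = -cos (π / m(i, j))`. An element of
the parabolic subgroup `W_Γ` changes any vector only by a combination of the `e z` with `z ∈ Γ`.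
A factor `Γ₁` misses a vertex `y` of some other component of `VΓ ∖ S`, so `m(x, y) = ∞` for any
`x` in `Γ₁ ∖ S`; then `(s x s y)^n e x = (2n+1) e x + 2n e y`, and its `e y`-coordinate shows that
no positive power of `s x s y` lies in `W_{Γ₁}`.
-/

open Polynomial.Chebyshev Finsupp

theorem Subgroup.infinite_quotient_of_pow_notMem {G : Type*} [Group G] {H : Subgroup G} {g : G}
    (h : ∀ n : ℕ, 0 < n → g ^ n ∉ H) : Infinite (G ⧸ H) := by
  rw [← Subgroup.index_eq_zero_iff_infinite]
  by_contra hH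
  obtain ⟨n, hn, -, hgn⟩ := H.exists_pow_mem_of_index_ne_zero hH g
  exact h n hn hgn

theorem Representation.apply_sub_mem_of_mem_closure {k G V : Type*} [CommRing k] [Group G]
    [AddCommGroup V] [Module k V] (ρ : Representation k G V) (U : Submodule k V) {s : Set G}
    (hs : ∀ g ∈ s, ∀ v, ρ g v - v ∈ U) {g : G} (hg : g ∈ Subgroup.closure s) :
    ∀ v, ρ g v - v ∈ U := by
  induction hg using Subgroup.closure_induction with
  | mem g hg => exact hs g hg
  | one => simp
  | mul g h _ _ hg hh =>
    intro v
    simpa [Module.End.mul_apply] using U.add_mem (hg (ρ h v)) (hh v)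
  | inv g _ hg =>
    intro v
    simpa [Representation.self_inv_apply] using U.neg_mem (hg (ρ g⁻¹ v))

theorem Real.sin_pi_div_pos {m : ℕ} (hm : 2 ≤ m) : 0 < Real.sin (Real.pi / m) := by
  have hm' : (2 : ℝ) ≤ m := by exact_mod_cast hm
  apply Real.sin_pos_of_pos_of_lt_pi (by positivity)
  rw [div_lt_iff₀ (by positivity)]
  nlinarith [Real.pi_pos]

theorem Polynomial.Chebyshev.U_eval_cos_pi_div {m : ℕ} (hm : 2 ≤ m) :
    (U ℝ (2 * m)).eval (Real.cos (Real.pi / m)) = 1 ∧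
      (U ℝ (2 * m - 1)).eval (Real.cos (Real.pi / m)) = 0 := by
  have hsin := Real.sin_pi_div_pos hm
  have hm0 : (m : ℝ) ≠ 0 := by positivity
  constructor
  · have h := U_real_cos (Real.pi / m) (2 * m)
    rw [show ((2 * m : ℤ) + 1 : ℝ) * (Real.pi / m) = Real.pi / m + 2 * Real.pi by
      push_cast; field_simp; ring, Real.sin_add_two_pi] at h
    exact mul_right_cancel₀ hsin.ne' (h.trans (one_mul _).symm)
  · have h := U_real_cos (Real.pi / m) (2 * m - 1)
    rw [show ((2 * m - 1 : ℤ) + 1 : ℝ) * (Real.pi / m) = 2 * Real.pi by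
      push_cast; field_simp; ring, Real.sin_two_pi] at h
    exact (mul_eq_zero.mp h).resolve_right hsin.ne'

namespace CoxeterMatrix

variable (M : CoxeterMatrix B)

noncomputable section

def geomForm (i j : B) : ℝ := -Real.cos (Real.pi / M i j)

def geomPairing (i : B) : (B →₀ ℝ) →ₗ[ℝ] ℝ := linearCombination ℝ (M.geomForm i)

def geomReflection (i : B) : Module.End ℝ (B →₀ ℝ) :=
  LinearMap.id - (2 • M.geomPairing i).smulRight (single i 1)

theorem geomForm_self (i : B) : M.geomForm i i = 1 := by
  simp [geomForm]

theorem geomForm_comm (i j : B) : M.geomForm i j = M.geomForm j i := by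
  rw [geomForm, geomForm, M.symmetric]

/-- `M i j = 0` encodes `m(i, j) = ∞`, and `π / 0 = 0` in Lean, so this is the expected
`-cos (π / ∞)`. -/
theorem geomForm_of_eq_zero {i j : B} (h : M i j = 0) : M.geomForm i j = -1 := by
  simp [geomForm, h]

@[simp]
theorem geomPairing_single (i j : B) (a : ℝ) :
    M.geomPairing i (single j a) = a * M.geomForm i j := by
  simp [geomPairing]

theorem geomReflection_apply (i : B) (v : B →₀ ℝ) :
    M.geomReflection i v = v - (2 * M.geomPairing i v) • single i 1 := by
  simp [geomReflection]

theorem geomReflection_apply_of_geomPairing_eq_zero {i : B} {v : B →₀ ℝ}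
    (h : M.geomPairing i v = 0) : M.geomReflection i v = v := by
  simp [geomReflection_apply, h]

theorem geomReflection_mul_self (i : B) : M.geomReflection i * M.geomReflection i = 1 := by
  refine LinearMap.ext fun v => ?_
  simp only [Module.End.mul_apply, Module.End.one_apply, geomReflection_apply, map_sub,
    map_smul, geomPairing_single, geomForm_self]
  module

theorem geomReflection_mul_pow_apply_single (i j : B) (n : ℕ) :
    ((M.geomReflection i * M.geomReflection j) ^ n) (single i 1) =
      (U ℝ (2 * n)).eval (-M.geomForm i j) • single i 1 +
        (U ℝ (2 * n - 1)).eval (-M.geomForm i j) • single j 1 := by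
  induction n with
  | zero => simp
  | succ n ih =>
    set c := -M.geomForm i j
    have hU (k : ℤ) : (U ℝ (k + 2)).eval c = 2 * c * (U ℝ (k + 1)).eval c - (U ℝ k).eval c := by
      simp [U_add_two]
    have hodd := hU (2 * n - 1)
    have heven := hU (2 * n)
    rw [show (2 * n - 1 + 2 : ℤ) = 2 * (n + 1 : ℕ) - 1 by push_cast; ring,
      show (2 * n - 1 + 1 : ℤ) = 2 * n by ring] at hodd
    rw [show (2 * n + 2 : ℤ) = 2 * (n + 1 : ℕ) by push_cast; ring,
      show (2 * n + 1 : ℤ) = 2 * (n + 1 : ℕ) - 1 by push_cast; ring] at heven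
    rw [pow_succ', Module.End.mul_apply, ih, heven, hodd, Module.End.mul_apply,
      geomReflection_apply, geomReflection_apply]
    simp only [map_add, map_sub, map_smul, geomPairing_single, geomForm_self,
      M.geomForm_comm j i, smul_eq_mul]
    module

theorem exists_eq_add_of_geomForm_sq_ne_one {i j : B} (h : M.geomForm i j ^ 2 ≠ 1)
    (v : B →₀ ℝ) : ∃ a b : ℝ, ∃ z : B →₀ ℝ, v = a • single i 1 + b • single j 1 + z ∧
      M.geomPairing i z = 0 ∧ M.geomPairing j z = 0 := by
  set f := M.geomForm i j
  have hdet : 1 - f ^ 2 ≠ 0 := sub_ne_zero.mpr (Ne.symm h)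
  set p := M.geomPairing i v
  set r := M.geomPairing j v
  obtain ⟨a, b, ha, hb⟩ : ∃ a b : ℝ, a + b * f = p ∧ a * f + b = r :=
    ⟨(p - f * r) / (1 - f ^ 2), (r - f * p) / (1 - f ^ 2), by field_simp; ring,
      by field_simp; ring⟩
  refine ⟨a, b, v - a • single i 1 - b • single j 1, by abel, ?_, ?_⟩ <;>
  · simp only [map_sub, map_smul, geomPairing_single, geomForm_self, M.geomForm_comm j i,
      smul_eq_mul]
    linarith

theorem geomReflection_mul_pow_apply_single_self {i j : B} (hm : 2 ≤ M i j) :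
    ((M.geomReflection i * M.geomReflection j) ^ M i j) (single i 1) = single i 1 := by
  obtain ⟨h2m, h2m_sub_one⟩ := U_eval_cos_pi_div hm
  rw [geomReflection_mul_pow_apply_single, geomForm, neg_neg, h2m, h2m_sub_one]
  simp

/-- On the plane spanned by `e i` and `e j` this is the Chebyshev computation above; since the form
is nondegenerate there, every vector is a plane vector plus one fixed by both reflections. -/
theorem geomReflection_mul_pow_eq_one (i j : B) :
    (M.geomReflection i * M.geomReflection j) ^ M i j = 1 := by
  rcases eq_or_ne (M i j) 0 with h0 | h0
  · rw [h0, pow_zero]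
  rcases eq_or_ne i j with rfl | hij
  · rw [M.diagonal, pow_one, geomReflection_mul_self]
  have hm : 2 ≤ M i j := by have := M.off_diagonal i j hij; omega
  set T := M.geomReflection i * M.geomReflection j
  have hTi : (T ^ M i j) (single i 1) = single i 1 :=
    M.geomReflection_mul_pow_apply_single_self hm
  have hTj : (T ^ M i j) (single j 1) = single j 1 := by
    have hinv : T * (M.geomReflection j * M.geomReflection i) = 1 := by
      rw [mul_assoc, ← mul_assoc (M.geomReflection j), geomReflection_mul_self, one_mul,
        geomReflection_mul_self]
    have hm' : 2 ≤ M j i := M.symmetric i j ▸ hm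
    calc (T ^ M i j) (single j 1)
        = (T ^ M i j * (M.geomReflection j * M.geomReflection i) ^ M j i) (single j 1) := by
          rw [Module.End.mul_apply, M.geomReflection_mul_pow_apply_single_self hm']
      _ = single j 1 := by
          rw [M.symmetric j i, pow_mul_pow_eq_one _ hinv, Module.End.one_apply]
  have hform : M.geomForm i j ^ 2 ≠ 1 := by
    have hsin := Real.sin_pi_div_pos hm
    rw [geomForm, neg_sq]
    nlinarith [Real.sin_sq_add_cos_sq (Real.pi / M i j)]
  refine LinearMap.ext fun v => ?_
  obtain ⟨a, b, z, rfl, hzi, hzj⟩ := M.exists_eq_add_of_geomForm_sq_ne_one hform v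
  have hTz : T z = z := by
    rw [Module.End.mul_apply, M.geomReflection_apply_of_geomPairing_eq_zero hzj,
      M.geomReflection_apply_of_geomPairing_eq_zero hzi]
  rw [map_add, map_add, map_smul, map_smul, hTi, hTj, Module.End.pow_apply,
    Function.iterate_fixed hTz, Module.End.one_apply]

def geomRep : Representation ℝ M.Group (B →₀ ℝ) :=
  M.toCoxeterSystem.lift ⟨M.geomReflection, M.geomReflection_mul_pow_eq_one⟩

theorem geomRep_simple (i : B) : M.geomRep (M.simple i) = M.geomReflection i :=
  M.toCoxeterSystem.lift_apply_simple _ i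

theorem geomRep_apply_sub_mem_supported {Γ : Set B} {w : M.Group}
    (hw : w ∈ Subgroup.closure (M.simple '' Γ)) (v : B →₀ ℝ) :
    M.geomRep w v - v ∈ supported ℝ ℝ Γ := by
  refine M.geomRep.apply_sub_mem_of_mem_closure _ ?_ hw v
  rintro _ ⟨i, hi, rfl⟩ v
  rw [geomRep_simple, geomReflection_apply, sub_sub_cancel_left]
  exact neg_mem (Submodule.smul_mem _ _ (single_mem_supported ℝ 1 hi))

theorem geomRep_pow_apply_single_of_eq_zero {x y : B} (h : M x y = 0) (n : ℕ) :
    M.geomRep ((M.simple x * M.simple y) ^ n) (single x 1) =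
      (2 * n + 1 : ℝ) • single x 1 + (2 * n : ℝ) • single y 1 := by
  rw [map_pow, map_mul, geomRep_simple, geomRep_simple, geomReflection_mul_pow_apply_single,
    geomForm_of_eq_zero M h, neg_neg, U_eval_one, U_eval_one]
  push_cast
  ring_nf

theorem infinite_quotient_closure_simple_of_eq_zero {Γ : Set B} {x y : B} (hy : y ∉ Γ)
    (hxy : M x y = 0) : Infinite (M.Group ⧸ Subgroup.closure (M.simple '' Γ)) := by
  have hne : x ≠ y := by rintro rfl; simp at hxy
  refine Subgroup.infinite_quotient_of_pow_notMem (g := M.simple x * M.simple y)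
    fun n hn hmem => ?_
  have h := (mem_supported' ℝ _).mp (M.geomRep_apply_sub_mem_supported hmem (single x 1)) y hy
  rw [M.geomRep_pow_apply_single_of_eq_zero hxy] at h
  simp [hne] at h
  omega

end

end CoxeterMatrix

theorem IsFactor.exists_notMem_eq_zero {M : CoxeterMatrix B} {S Γ₁ : Set B}
    (hf : IsFactor M S Γ₁) : ∃ x y, y ∉ Γ₁ ∧ M x y = 0 := by
  obtain ⟨-, -, C, rfl, hCS, ⟨x, hx⟩, ⟨y, hyS, hyC⟩, hclosed⟩ := hf
  refine ⟨x, y, fun hy => hy.elim hyS hyC, ?_⟩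
  by_contra h
  have hadj : ((cGraph M).induce Sᶜ).Adj ⟨x, hCS hx⟩ ⟨y, hyS⟩ :=
    ⟨fun hxy => hyC (by simp at hxy; exact hxy ▸ hx), h⟩
  exact hyC (hclosed _ _ hadj.reachable hx)

theorem parabolic_infinite_index_general {B : Type*} (M : CoxeterMatrix B) (S Γ₁ : Set B)
    (hf : IsFactor M S Γ₁) :
    Infinite (M.Group ⧸ Subgroup.closure (M.simple '' Γ₁)) := by
  obtain ⟨x, y, hy, hxy⟩ := hf.exists_notMem_eq_zero
  exact M.infinite_quotient_closure_simple_of_eq_zero hy hxy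

theorem parabolic_infinite_index {B : Type*} (M : CoxeterMatrix B) (S Γ₁ : Set B)
    (hf : IsFactor M S Γ₁)
    (hgood : ∃ σ : Equiv.Perm ↥Γ₁, σ ≠ 1 ∧
      (∀ a b : ↥Γ₁, M ((σ a : B)) ((σ b : B)) = M (a : B) (b : B)) ∧
      (∀ a : ↥Γ₁, (a : B) ∈ S → σ a = a)) :
    Infinite (M.Group ⧸ Subgroup.closure (M.simple '' Γ₁)) :=
  parabolic_infinite_index_general M S Γ₁ hf
end

section
/- Let Γ be an infinite tree (a connected simplicial graph with no cycles) without leaves (every vertex has degree at least 2). Then the complement graph Γ^c, regarded as a right-angled weighted graph (all edges of weight 2), does not admit a good separating set; equivalently, for every vertex v of Γ^c and every nontrivial automorphism α of Γ^c, α does not restrict to the identity on star_{Γ^c}(v). -/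
/-!
Setup for Cayley graphs of Coxeter groups.

A weighted graph `Γ = (VΓ, EΓ, m)` in the sense of the paper is encoded by a Mathlib
`CoxeterMatrix B` (`B = VΓ`): the weight `m x y` is `M x y`, where the entry `0` encodes `∞`
(no relation / no edge).  The associated Coxeter group is `M.Group`, with standard generators
`M.simple x`.
-/

open CoxeterMatrix

variable {B : Type*}

/-!
If `S` is a good separating set, witnessed by an automorphism `σ` of a factor `S ∪ C`, then
`σ` extended by the identity is a nontrivial automorphism of the whole graph, and it fixes the
star of any vertex `v` outside `S ∪ C`, because `C` has no neighbours outside `S ∪ C`.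

In the complement of a leafless tree `G`, a nontrivial automorphism `σ` fixing the star of `v`
fixes every vertex not `G`-adjacent to `v`, so it moves some `G`-neighbour `u` of `v`. Choosing a
second neighbour `w ≠ v` of `u` (which is not adjacent to `v`, as `G` has no triangles, and so
is fixed), both `v - u - w` and `v - σ u - w` are paths in `G`, contradicting acyclicity.
-/

open SimpleGraph

section WeightedGraph

variable {M : CoxeterMatrix B}

lemma weight_eq_zero_of_reachable_closed {S C : Set B} (hCS : C ⊆ Sᶜ)
    (hC : ∀ x y : ↥(Sᶜ), ((cGraph M).induce Sᶜ).Reachable x y → (x : B) ∈ C → (y : B) ∈ C)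
    {c y : B} (hc : c ∈ C) (hy : y ∈ Sᶜ \ C) : M c y = 0 := by
  by_contra h
  have hcy : (cGraph M).Adj c y := ⟨fun he => hy.2 (he ▸ hc), h⟩
  exact hy.2 (hC ⟨c, hCS hc⟩ ⟨y, hy.1⟩ (Adj.reachable hcy) hc)

lemma ofSubtype_mem_wAut {Γ : Set B} [DecidablePred (· ∈ Γ)] (σ : Equiv.Perm Γ)
    (hσ : ∀ a b : Γ, M (σ a) (σ b) = M a b) (hbd : ∀ a : Γ, ∀ y ∉ Γ, M (σ a) y = M a y) :
    Equiv.Perm.ofSubtype σ ∈ wAut M := by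
  intro x y
  by_cases hx : x ∈ Γ <;> by_cases hy : y ∈ Γ <;>
    simp only [Equiv.Perm.ofSubtype_apply_of_mem, Equiv.Perm.ofSubtype_apply_of_not_mem, hx, hy,
      not_false_eq_true]
  · exact hσ ⟨x, hx⟩ ⟨y, hy⟩
  · exact hbd ⟨x, hx⟩ y hy
  · rw [M.symmetric, hbd ⟨y, hy⟩ x hx, M.symmetric]

lemma IsGoodSepSet.exists_wAut_fixing_starSet {S : Set B} (hS : IsGoodSepSet M S) :
    ∃ v, ∃ σ ∈ wAut M, σ ≠ 1 ∧ ∀ y ∈ starSet M v, σ y = y := by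
  classical
  obtain ⟨_, ⟨-, -, C, rfl, hCS, -, ⟨v, hvS, hvC⟩, hC⟩, σ, hσ1, hσM, hσS⟩ := hS
  have hzero : ∀ {c y}, c ∈ C → y ∈ Sᶜ \ C → M c y = 0 :=
    weight_eq_zero_of_reachable_closed hCS hC
  have hσC : ∀ a : ↥(S ∪ C), (a : B) ∈ C → (σ a : B) ∈ C := by
    intro a ha
    -- `σ a ∈ S` would give `σ (σ a) = σ a`, hence `a = σ a ∈ S`
    refine (σ a).2.resolve_left fun h => hCS ha ?_
    rwa [← σ.injective (hσS _ h)]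
  have hbd : ∀ a : ↥(S ∪ C), ∀ y ∉ S ∪ C, M (σ a) y = M a y := by
    intro a y hy
    have hy' : y ∈ Sᶜ \ C := by simpa [not_or] using hy
    rcases a.2 with ha | ha
    · rw [hσS a ha]
    · rw [hzero (hσC a ha) hy', hzero ha hy']
  have hvΓ : v ∉ S ∪ C := fun h => h.elim hvS hvC
  refine ⟨v, _, ofSubtype_mem_wAut σ hσM hbd,
    (map_ne_one_iff _ Equiv.Perm.ofSubtype_injective).2 hσ1, fun y hy => ?_⟩
  by_cases hyΓ : y ∈ S ∪ C
  · rw [Equiv.Perm.ofSubtype_apply_of_mem σ hyΓ]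
    rcases hyΓ with hyS | hyC
    · exact congrArg Subtype.val (hσS ⟨y, Or.inl hyS⟩ hyS)
    · obtain rfl | hadj := hy
      · exact absurd hyC hvC
      · exact absurd (hzero hyC ⟨hvS, hvC⟩) (by rw [M.symmetric]; exact hadj.2)
  · exact Equiv.Perm.ofSubtype_apply_of_not_mem σ hyΓ

end WeightedGraph

section RightAngled

variable {V : Type*} (G : SimpleGraph V)

open Classical in
lemma ofGraph_apply (x y : V) :
    ofGraph G x y = if x = y then 1 else if G.Adj x y then 2 else 0 := rfl

lemma ofGraph_eq_two_iff {x y : V} : ofGraph G x y = 2 ↔ G.Adj x y := by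
  rw [ofGraph_apply]
  split_ifs <;> simp_all

@[simp]
lemma cGraph_ofGraph : cGraph (ofGraph G) = G := by
  ext x y
  change x ≠ y ∧ ofGraph G x y ≠ 0 ↔ G.Adj x y
  rw [ofGraph_apply]
  split_ifs with h1 h2
  · simp [h1]
  · simp [h1, h2]
  · simp [h2]

lemma mem_wAut_ofGraph_iff {σ : Equiv.Perm V} : σ ∈ wAut (ofGraph G) ↔ σ ∈ graphAut G := by
  refine ⟨fun h x y => by rw [← ofGraph_eq_two_iff, ← ofGraph_eq_two_iff, h], fun h x y => ?_⟩
  have hadj : G.Adj (σ x) (σ y) ↔ G.Adj x y := h x y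
  rw [ofGraph_apply, ofGraph_apply]
  split_ifs <;> simp_all

lemma graphAut_compl : graphAut Gᶜ = graphAut G := by
  ext σ
  change (∀ x y, Gᶜ.Adj (σ x) (σ y) ↔ Gᶜ.Adj x y) ↔ ∀ x y, G.Adj (σ x) (σ y) ↔ G.Adj x y
  simp only [compl_adj, σ.injective.ne_iff]
  refine forall₂_congr fun x y => ?_
  by_cases hxy : x = y
  · simp [hxy]
  · simp [hxy, not_iff_not]

end RightAngled

namespace SimpleGraph.IsAcyclic

variable {V : Type*} {G : SimpleGraph V}

lemma eq_of_adj_of_adj (hG : G.IsAcyclic) {v u u' w : V} (hvw : v ≠ w)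
    (hvu : G.Adj v u) (huw : G.Adj u w) (hvu' : G.Adj v u') (hu'w : G.Adj u' w) : u = u' := by
  have hp : (Walk.cons hvu (Walk.cons huw .nil)).IsPath := by
    simp [Walk.isPath_def, hvu.ne, hvw, huw.ne]
  have hp' : (Walk.cons hvu' (Walk.cons hu'w .nil)).IsPath := by
    simp [Walk.isPath_def, hvu'.ne, hvw, hu'w.ne]
  have h := (hG.subsingleton_path v w).elim ⟨_, hp⟩ ⟨_, hp'⟩
  simpa using congrArg (fun p : G.Path v w => p.1.snd) h

lemma not_adj_of_adj_of_adj (hG : G.IsAcyclic) {u v w : V} (huv : G.Adj u v) (hvw : G.Adj v w) :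
    ¬ G.Adj u w := by
  classical
  exact fun huw => hG.cliqueFree le_rfl {u, v, w} (is3Clique_triple_iff.2 ⟨huv, huw, hvw⟩)

lemma eq_one_of_mem_graphAut_of_forall_not_adj (hG : G.IsAcyclic)
    (hnoleaf : ∀ u, (G.neighborSet u).Nontrivial) {σ : Equiv.Perm V} (hσ : σ ∈ graphAut G)
    {v : V} (hfix : ∀ y, ¬ G.Adj v y → σ y = y) : σ = 1 := by
  ext u
  by_contra hu
  have hvu : G.Adj v u := not_imp_comm.1 (hfix u) hu
  obtain ⟨w, huw, hwv⟩ := (hnoleaf u).exists_ne v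
  have hσw : σ w = w := hfix w (hG.not_adj_of_adj_of_adj hvu huw)
  have hvσu : G.Adj v (σ u) := by simpa [hfix v G.irrefl] using (hσ v u).2 hvu
  have hσuw : G.Adj (σ u) w := by simpa [hσw] using (hσ u w).2 huw
  exact hu (hG.eq_of_adj_of_adj (Ne.symm hwv) hvu huw hvσu hσuw).symm

end SimpleGraph.IsAcyclic

theorem tree_complement_no_good_sep_set_general {V : Type*} (G : SimpleGraph V)
    (htree : G.IsTree) (hnoleaf : ∀ v : V, (G.neighborSet v).Nontrivial) :
    (¬ ∃ S : Set V, IsGoodSepSet (ofGraph Gᶜ) S) ∧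
    (∀ (v : V) (σ : Equiv.Perm V), (∀ x y : V, Gᶜ.Adj (σ x) (σ y) ↔ Gᶜ.Adj x y) → σ ≠ 1 →
      ¬ ∀ y ∈ starSet (ofGraph Gᶜ) v, σ y = y) := by
  have hstar : ∀ v, ∀ σ ∈ graphAut Gᶜ, σ ≠ 1 → ¬ ∀ y ∈ starSet (ofGraph Gᶜ) v, σ y = y := by
    intro v σ hσ hne hfix
    rw [graphAut_compl] at hσ
    refine hne (htree.isAcyclic.eq_one_of_mem_graphAut_of_forall_not_adj hnoleaf hσ (v := v)
      fun y hy => hfix y ?_)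
    by_cases hyv : y = v
    · exact Or.inl hyv
    · exact Or.inr (by simpa [starSet, Ne.symm hyv] using hy)
  refine ⟨fun ⟨S, hS⟩ => ?_, hstar⟩
  obtain ⟨v, σ, hσ, hne, hfix⟩ := hS.exists_wAut_fixing_starSet
  exact hstar v σ ((mem_wAut_ofGraph_iff Gᶜ).1 hσ) hne hfix

theorem tree_complement_no_good_sep_set {V : Type*} [Infinite V] (G : SimpleGraph V)
    (htree : G.IsTree) (hnoleaf : ∀ v : V, (G.neighborSet v).Nontrivial) :
    (¬ ∃ S : Set V, IsGoodSepSet (ofGraph Gᶜ) S) ∧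
    (∀ (v : V) (σ : Equiv.Perm V), (∀ x y : V, Gᶜ.Adj (σ x) (σ y) ↔ Gᶜ.Adj x y) → σ ≠ 1 →
      ¬ ∀ y ∈ starSet (ofGraph Gᶜ) v, σ y = y) :=
  tree_complement_no_good_sep_set_general G htree hnoleaf
end
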